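/- Let R, R* be differentiable curves in SO(3) with Ṙ = Rω̂ and Ṙ* = R*ω̂*, and define e_ω = ω − RᵀR*ω*. Then the orientation error e_R = (1/2)(R*ᵀR − RᵀR*)ᵛ satisfies ė_R = E(R,R*) e_ω, where E(R,R*) = (1/2)(tr(RᵀR*)I − RᵀR*). -/

import Mathlib

/-!
With `A = Rᵀ R*`, the product rule turns the derivative of `R*ᵀ R − Rᵀ R*` into
`Aᵀ ω̂ + ω̂ A − (A ω̂* − (A ω̂*)ᵀ)`. For `A ∈ SO(3)` conjugation acts on hats by
`A v̂ = (A v)^ A`, so this equals `Aᵀ ê + ê A` with `e = ω − A ω*`, and the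
elementary identity `(Aᵀ v̂ + v̂ A)ᵛ = (tr A · I − A) v` finishes the computation.
-/

open Matrix
attribute [local instance] Matrix.normedAddCommGroup Matrix.normedSpace

noncomputable def hat (v : Fin 3 → ℝ) : Matrix (Fin 3) (Fin 3) ℝ :=
  !![0, -v 2, v 1; v 2, 0, -v 0; -v 1, v 0, 0]

noncomputable def vee (A : Matrix (Fin 3) (Fin 3) ℝ) : Fin 3 → ℝ :=
  ![A 2 1, A 0 2, A 1 0]

section
variable {𝕜 : Type*} [NontriviallyNormedField 𝕜] {m n : Type*}

theorem HasDerivAt.matrix_apply [Fintype m] [Fintype n] {u : 𝕜 → Matrix m n 𝕜}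
    {u' : Matrix m n 𝕜} {t : 𝕜} (hu : HasDerivAt u u' t) (i : m) (j : n) :
    HasDerivAt (fun s => u s i j) (u' i j) t :=
  hasDerivAt_pi.1 (hasDerivAt_pi.1 hu i) j

theorem HasDerivAt.matrix_transpose [Fintype m] [Fintype n] {u : 𝕜 → Matrix m n 𝕜}
    {u' : Matrix m n 𝕜} {t : 𝕜} (hu : HasDerivAt u u' t) :
    HasDerivAt (fun s => (u s)ᵀ) u'ᵀ t :=
  hasDerivAt_pi.2 fun j => hasDerivAt_pi.2 fun i => hu.matrix_apply i j

theorem HasDerivAt.matrix_mul [CompleteSpace 𝕜] [Fintype n] {u v : 𝕜 → Matrix n n 𝕜}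
    {u' v' : Matrix n n 𝕜} {t : 𝕜} (hu : HasDerivAt u u' t) (hv : HasDerivAt v v' t) :
    HasDerivAt (fun s => u s * v s) (u' * v t + u t * v') t := by
  rw [add_comm]
  exact (LinearMap.mul 𝕜 (Matrix n n 𝕜)).toContinuousBilinearMap.hasDerivAt_of_bilinear
    (fun _ => hu) (fun _ => hv)

end

section
variable {n : Type*} [Fintype n] [DecidableEq n]

theorem mem_specialOrthogonalGroup_of_transpose_mul_self {A : Matrix n n ℝ}
    (h : Aᵀ * A = 1) (hdet : A.det = 1) : A ∈ specialOrthogonalGroup n ℝ :=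
  mem_specialOrthogonalGroup_iff.2 ⟨(mem_orthogonalGroup_iff' _ _).2 h, hdet⟩

theorem transpose_mul_mem_specialOrthogonalGroup {A B : Matrix n n ℝ}
    (hA : A ∈ specialOrthogonalGroup n ℝ) (hB : B ∈ specialOrthogonalGroup n ℝ) :
    Aᵀ * B ∈ specialOrthogonalGroup n ℝ := by
  simpa [star_eq_conjTranspose] using (star ⟨A, hA⟩ * ⟨B, hB⟩ : specialOrthogonalGroup n ℝ).2

end

theorem HasDerivAt.vee {u : ℝ → Matrix (Fin 3) (Fin 3) ℝ} {u' : Matrix (Fin 3) (Fin 3) ℝ}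
    {t : ℝ} (hu : HasDerivAt u u' t) : HasDerivAt (fun s => vee (u s)) (vee u') t := by
  refine hasDerivAt_pi.2 fun i => ?_
  fin_cases i <;> exact hu.matrix_apply _ _

theorem hat_sub (v w : Fin 3 → ℝ) : hat (v - w) = hat v - hat w := by
  ext i j; fin_cases i <;> fin_cases j <;> simp [hat] <;> ring

theorem hat_transpose (v : Fin 3 → ℝ) : (hat v)ᵀ = -hat v := by
  ext i j; fin_cases i <;> fin_cases j <;> simp [hat]

-- Both sides send `(z, w)` to `det M * det ![z, v, w]`, as `z ⬝ᵥ u ⨯₃ w = det ![z, u, w]`.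
theorem transpose_mul_hat_mulVec_mul (M : Matrix (Fin 3) (Fin 3) ℝ) (v : Fin 3 → ℝ) :
    Mᵀ * hat (M *ᵥ v) * M = M.det • hat v := by
  ext i j; fin_cases i <;> fin_cases j <;>
    simp [hat, Matrix.mul_apply, Fin.sum_univ_three, Matrix.mulVec, dotProduct,
      Matrix.det_fin_three] <;> ring

theorem mul_hat_eq_hat_mulVec_mul {A : Matrix (Fin 3) (Fin 3) ℝ}
    (hA : A ∈ specialOrthogonalGroup (Fin 3) ℝ) (v : Fin 3 → ℝ) :
    A * hat v = hat (A *ᵥ v) * A := by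
  obtain ⟨hA, hdet⟩ := mem_specialOrthogonalGroup_iff.1 hA
  have hAAt : A * Aᵀ = 1 := by simpa using (mem_orthogonalGroup_iff _ _).1 hA
  rw [← one_smul ℝ (hat v), ← hdet, ← transpose_mul_hat_mulVec_mul, ← Matrix.mul_assoc,
    ← Matrix.mul_assoc, hAAt, Matrix.one_mul]

theorem vee_transpose_mul_hat_add_hat_mul (A : Matrix (Fin 3) (Fin 3) ℝ) (v : Fin 3 → ℝ) :
    vee (Aᵀ * hat v + hat v * A) = (A.trace • 1 - A) *ᵥ v := by
  ext i; fin_cases i <;>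
    simp [vee, hat, Matrix.mul_apply, Matrix.trace, Fin.sum_univ_three, Matrix.mulVec,
      dotProduct, Matrix.vecMul, Matrix.sub_apply, Matrix.one_apply] <;> ring

theorem skew_relative_rotation_deriv_eq {R Rs : Matrix (Fin 3) (Fin 3) ℝ}
    (hA : Rᵀ * Rs ∈ specialOrthogonalGroup (Fin 3) ℝ) (v vs : Fin 3 → ℝ) :
    ((Rs * hat vs)ᵀ * R + Rsᵀ * (R * hat v)) - ((R * hat v)ᵀ * Rs + Rᵀ * (Rs * hat vs)) =
      (Rᵀ * Rs)ᵀ * hat (v - (Rᵀ * Rs) *ᵥ vs) + hat (v - (Rᵀ * Rs) *ᵥ vs) * (Rᵀ * Rs) := by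
  have hconj := mul_hat_eq_hat_mulVec_mul hA vs
  have hconjT := congrArg Matrix.transpose hconj
  simp only [transpose_mul, hat_transpose, transpose_transpose, mul_neg, neg_mul,
    neg_inj] at hconjT
  simp only [transpose_mul, hat_transpose, transpose_transpose, hat_sub, mul_sub, sub_mul,
    neg_mul, Matrix.mul_assoc] at hconj hconjT ⊢
  rw [hconj, hconjT]
  abel

theorem eR_deriv (R Rs : ℝ → Matrix (Fin 3) (Fin 3) ℝ) (ω ωs : ℝ → Fin 3 → ℝ)
    (hR : ∀ t, (R t)ᵀ * R t = 1) (hdetR : ∀ t, (R t).det = 1)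
    (hRs : ∀ t, (Rs t)ᵀ * Rs t = 1) (hdetRs : ∀ t, (Rs t).det = 1)
    (hRdot : ∀ t, HasDerivAt R (R t * hat (ω t)) t)
    (hRsdot : ∀ t, HasDerivAt Rs (Rs t * hat (ωs t)) t) (t : ℝ) :
    HasDerivAt (fun s => ((1:ℝ)/2) • vee ((Rs s)ᵀ * R s - (R s)ᵀ * Rs s))
      ((((1:ℝ)/2) • (Matrix.trace ((R t)ᵀ * Rs t) • (1 : Matrix (Fin 3) (Fin 3) ℝ) - (R t)ᵀ * Rs t)) *ᵥ
        (ω t - ((R t)ᵀ * Rs t) *ᵥ ωs t)) t := by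
  have hA : (R t)ᵀ * Rs t ∈ specialOrthogonalGroup (Fin 3) ℝ :=
    transpose_mul_mem_specialOrthogonalGroup
      (mem_specialOrthogonalGroup_of_transpose_mul_self (hR t) (hdetR t))
      (mem_specialOrthogonalGroup_of_transpose_mul_self (hRs t) (hdetRs t))
  have hderiv := (((hRsdot t).matrix_transpose.matrix_mul (hRdot t)).sub
    ((hRdot t).matrix_transpose.matrix_mul (hRsdot t))).vee.const_smul ((1:ℝ)/2)
  rw [skew_relative_rotation_deriv_eq hA, vee_transpose_mul_hat_add_hat_mul] at hderiv
  rw [smul_mulVec]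
  exact hderiv
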